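/- Monotone improvement of alternating policy/opponent-model updates: starting from any conditional policy π₀ and opponent model ρ₀, define recursively π_{k+1}(s,b,a) = exp(Q_{π_k,ρ_k}(s,a,b)/α)/∑_{a'} exp(Q_{π_k,ρ_k}(s,a',b)/α) and ρ_{k+1}(s,b) ∝ P(s,b)·exp( ∑_a π_{k+1}(s,b,a)·(Q_{π_{k+1},ρ_k}(s,a,b) − α·log π_{k+1}(s,b,a)) ) (normalized over b). Then the sequence of evaluation values is pointwise nondecreasing: Q_{π_k,ρ_k}(s,a,b) ≤ Q_{π_{k+1},ρ_{k+1}}(s,a,b) for all k and all (s,a,b). -/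

import Mathlib

/-- The policy-evaluation operator
(𝒯_{π,ρ}Q)(s,a,b) = R(s,a,b) + γ·∑_{s'} p(s,a,b,s')·( ∑_{b'} ρ(s',b')·( ∑_{a'}
π(s',b',a')·(Q(s',a',b') − α·log π(s',b',a')) ) − ∑_{b'} ρ(s',b')·log(ρ(s',b')/P(s',b')) ). -/
noncomputable def evalOp {S A B : Type*} [Fintype S] [Fintype A] [Fintype B]
    (α γ : ℝ) (R : S × A × B → ℝ) (p : S → A → B → S → ℝ) (P : S → B → ℝ)
    (π : S → B → A → ℝ) (ρ : S → B → ℝ)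
    (Q : S × A × B → ℝ) : S × A × B → ℝ :=
  fun x => R x + γ * ∑ s', p x.1 x.2.1 x.2.2 s' *
    ((∑ b', ρ s' b' *
        (∑ a', π s' b' a' * (Q (s', a', b') - α * Real.log (π s' b' a'))))
      - ∑ b', ρ s' b' * Real.log (ρ s' b' / P s' b'))

/-- The greedy conditional policy π̃(s,b,a) = exp(Q(s,a,b)/α)/∑_{a'} exp(Q(s,a',b)/α). -/
noncomputable def greedyPolicy {S A B : Type*} [Fintype A]
    (α : ℝ) (Q : S × A × B → ℝ) : S → B → A → ℝ :=
  fun s b a => Real.exp (Q (s, a, b) / α) / ∑ a', Real.exp (Q (s, a', b) / α)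

/-- The improved opponent model
ρ̃(s,b) ∝ P(s,b)·exp( ∑_a π(s,b,a)·(Q(s,a,b) − α·log π(s,b,a)) ), normalized over b. -/
noncomputable def improvedOpponent {S A B : Type*} [Fintype A] [Fintype B]
    (α : ℝ) (P : S → B → ℝ) (π : S → B → A → ℝ)
    (Q : S × A × B → ℝ) : S → B → ℝ :=
  fun s b =>
    P s b * Real.exp (∑ a, π s b a * (Q (s, a, b) - α * Real.log (π s b a)))
      / ∑ b', P s b' *
          Real.exp (∑ a, π s b' a * (Q (s, a, b') - α * Real.log (π s b' a)))

/-!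
Each half-step of the iteration is a one-step improvement of a policy-evaluation operator
followed by a comparison principle. Replacing the policy by the softmax of `Q_{π_k,ρ_k}`, or
the opponent model by the Gibbs reweighting of the prior, maximises the entropy-regularised
one-step value at every state, by Gibbs' variational inequality
`∑ q (x - log (q / c)) ≤ log ∑ c eˣ`, with equality at `q ∝ c eˣ`. Hence the old value is a
sub-solution of the new operator, and a sub-solution of a monotone `γ`-contraction lies below
its fixed point: at a point where `Q - Q'` is maximal, equal to `M`, one gets `M ≤ γ M`.
So `Q_{π_k,ρ_k} ≤ Q_{π_{k+1},ρ_k} ≤ Q_{π_{k+1},ρ_{k+1}}`.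
-/

open Finset Function
open Real (exp log exp_pos log_exp log_div log_mul log_le_sub_one_of_pos)

section Gibbs

variable {I : Type*} [Fintype I]

noncomputable def gibbs (c x : I → ℝ) : I → ℝ :=
  fun i => c i * exp (x i) / ∑ j, c j * exp (x j)

variable [Nonempty I] {c : I → ℝ}

theorem gibbs_mem_stdSimplex (hc : ∀ i, 0 < c i) (x : I → ℝ) : gibbs c x ∈ stdSimplex ℝ I := by
  have hZ : 0 < ∑ j, c j * exp (x j) :=
    sum_pos (fun j _ => mul_pos (hc j) (exp_pos _)) univ_nonempty
  refine ⟨fun i => div_nonneg (mul_pos (hc i) (exp_pos _)).le hZ.le, ?_⟩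
  simp only [gibbs, ← sum_div, div_self hZ.ne']

theorem sum_mul_sub_log_div_le_log_sum_mul_exp {q : I → ℝ} (hq : q ∈ stdSimplex ℝ I)
    (hc : ∀ i, 0 < c i) (x : I → ℝ) :
    ∑ i, q i * (x i - log (q i / c i)) ≤ log (∑ i, c i * exp (x i)) := by
  set Z := ∑ i, c i * exp (x i)
  have hZ : 0 < Z := sum_pos (fun i _ => mul_pos (hc i) (exp_pos _)) univ_nonempty
  have termwise (i : I) :
      q i * (x i - log (q i / c i)) ≤ q i * log Z + (c i * exp (x i) / Z - q i) := by
    have hw : 0 < c i * exp (x i) := mul_pos (hc i) (exp_pos _)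
    obtain hqi | hqi := (hq.1 i).eq_or_lt
    · rw [← hqi]
      simpa using div_nonneg hw.le hZ.le
    · calc q i * (x i - log (q i / c i))
          = q i * log Z + q i * log (c i * exp (x i) / (q i * Z)) := by
            rw [log_div hw.ne' (mul_pos hqi hZ).ne', log_mul (hc i).ne' (exp_pos _).ne',
              log_mul hqi.ne' hZ.ne', log_exp, log_div hqi.ne' (hc i).ne']
            ring
        _ ≤ q i * log Z + q i * (c i * exp (x i) / (q i * Z) - 1) := by
            gcongr
            exact log_le_sub_one_of_pos (div_pos hw (mul_pos hqi hZ))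
        _ = q i * log Z + (c i * exp (x i) / Z - q i) := by
            field_simp
  calc ∑ i, q i * (x i - log (q i / c i))
      ≤ ∑ i, (q i * log Z + (c i * exp (x i) / Z - q i)) := sum_le_sum fun i _ => termwise i
    _ = log Z := by
      rw [sum_add_distrib, sum_sub_distrib, ← sum_mul, hq.2, ← sum_div, div_self hZ.ne']
      ring

theorem sum_gibbs_mul_sub_log_div_eq_log_sum_mul_exp (hc : ∀ i, 0 < c i) (x : I → ℝ) :
    ∑ i, gibbs c x i * (x i - log (gibbs c x i / c i)) = log (∑ i, c i * exp (x i)) := by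
  have hZ : 0 < ∑ j, c j * exp (x j) :=
    sum_pos (fun j _ => mul_pos (hc j) (exp_pos _)) univ_nonempty
  have hlog (i : I) : log (gibbs c x i / c i) = x i - log (∑ j, c j * exp (x j)) := by
    have : gibbs c x i / c i = exp (x i) / ∑ j, c j * exp (x j) := by
      simp only [gibbs]
      field_simp [(hc i).ne']
    rw [this, log_div (exp_pos _).ne' hZ.ne', log_exp]
  simp only [hlog, sub_sub_cancel, ← sum_mul, (gibbs_mem_stdSimplex hc x).2, one_mul]

end Gibbs

theorem sum_mul_le_sum_mul_add {I : Type*} [Fintype I] {q f g : I → ℝ} {M : ℝ}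
    (hq : q ∈ stdSimplex ℝ I) (h : ∀ i, f i ≤ g i + M) :
    ∑ i, q i * f i ≤ ∑ i, q i * g i + M :=
  calc ∑ i, q i * f i ≤ ∑ i, (q i * g i + q i * M) :=
        sum_le_sum fun i _ => by rw [← mul_add]; exact mul_le_mul_of_nonneg_left (h i) (hq.1 i)
    _ = ∑ i, q i * g i + M := by rw [sum_add_distrib, ← sum_mul, hq.2, one_mul]

theorem le_of_le_map_of_isFixedPt {X : Type*} [Finite X] {T : (X → ℝ) → X → ℝ} {γ : ℝ}
    (hγ : γ < 1) (hT : ∀ f g M, (∀ x, f x ≤ g x + M) → ∀ x, T f x ≤ T g x + γ * M)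
    {f g : X → ℝ} (hf : f ≤ T f) (hg : IsFixedPt T g) : f ≤ g := by
  cases isEmpty_or_nonempty X
  · exact fun x => isEmptyElim x
  obtain ⟨x₀, hx₀⟩ := Finite.exists_max fun x => f x - g x
  have hM (x : X) : f x ≤ g x + (f x₀ - g x₀) := by linarith [hx₀ x]
  have hM_le : f x₀ - g x₀ ≤ γ * (f x₀ - g x₀) := by
    have := hT f g _ hM x₀
    rw [hg] at this
    linarith [hf x₀]
  have hM_nonpos : f x₀ - g x₀ ≤ 0 := by nlinarith
  exact fun x => by linarith [hx₀ x]

section Values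

variable {S A B : Type*}

noncomputable def policyValue [Fintype A] (α : ℝ) (π : S → B → A → ℝ) (Q : S × A × B → ℝ)
    (s : S) (b : B) : ℝ :=
  ∑ a, π s b a * (Q (s, a, b) - α * log (π s b a))

noncomputable def softValue [Fintype A] [Fintype B] (α : ℝ) (P : S → B → ℝ)
    (π : S → B → A → ℝ) (ρ : S → B → ℝ) (Q : S × A × B → ℝ) (s : S) : ℝ :=
  ∑ b, ρ s b * (policyValue α π Q s b - log (ρ s b / P s b))

section Policy

variable [Fintype A] {α : ℝ} {π : S → B → A → ℝ} {Q : S × A × B → ℝ} {s : S} {b : B}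

/-- The `/ 1` puts the value in the shape of Gibbs' inequality with uniform weights `c = 1`. -/
theorem policyValue_eq_mul_sum (hα : α ≠ 0) :
    policyValue α π Q s b = α * ∑ a, π s b a * (Q (s, a, b) / α - log (π s b a / 1)) := by
  simp only [policyValue, mul_sum, div_one]
  exact sum_congr rfl fun a _ => by field_simp

theorem greedyPolicy_eq_gibbs :
    greedyPolicy α Q s b = gibbs (fun _ => 1) (fun a => Q (s, a, b) / α) := by
  ext a
  simp only [greedyPolicy, gibbs, one_mul]

variable [Nonempty A]

theorem greedyPolicy_mem_stdSimplex : greedyPolicy α Q s b ∈ stdSimplex ℝ A := by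
  rw [greedyPolicy_eq_gibbs]
  exact gibbs_mem_stdSimplex (fun _ => one_pos) _

theorem policyValue_le_policyValue_greedyPolicy (hα : 0 < α) (hπ : π s b ∈ stdSimplex ℝ A) :
    policyValue α π Q s b ≤ policyValue α (greedyPolicy α Q) Q s b := by
  rw [policyValue_eq_mul_sum hα.ne', policyValue_eq_mul_sum hα.ne', greedyPolicy_eq_gibbs]
  refine mul_le_mul_of_nonneg_left ?_ hα.le
  exact (sum_mul_sub_log_div_le_log_sum_mul_exp hπ (fun _ => one_pos) _).trans_eq
    (sum_gibbs_mul_sub_log_div_eq_log_sum_mul_exp (fun _ => one_pos) _).symm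

end Policy

variable [Fintype A] [Fintype B] {α : ℝ} {P : S → B → ℝ} {π : S → B → A → ℝ}
  {ρ : S → B → ℝ} {Q : S × A × B → ℝ} {s : S}

theorem softValue_le_softValue_greedyPolicy [Nonempty A] (hα : 0 < α)
    (hπ : ∀ b, π s b ∈ stdSimplex ℝ A) (hρ : ∀ b, 0 ≤ ρ s b) :
    softValue α P π ρ Q s ≤ softValue α P (greedyPolicy α Q) ρ Q s := by
  unfold softValue
  gcongr with b
  · exact hρ b
  · exact policyValue_le_policyValue_greedyPolicy hα (hπ b)

theorem softValue_le_softValue_improvedOpponent [Nonempty B] (hP : ∀ b, 0 < P s b)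
    (hρ : ρ s ∈ stdSimplex ℝ B) :
    softValue α P π ρ Q s ≤ softValue α P π (improvedOpponent α P π Q) Q s :=
  -- `improvedOpponent α P π Q s` is definitionally `gibbs (P s) (policyValue α π Q s)`.
  (sum_mul_sub_log_div_le_log_sum_mul_exp hρ hP _).trans_eq
    (sum_gibbs_mul_sub_log_div_eq_log_sum_mul_exp hP _).symm

theorem softValue_le_softValue_add {Q' : S × A × B → ℝ} {M : ℝ}
    (hπ : ∀ b, π s b ∈ stdSimplex ℝ A) (hρ : ρ s ∈ stdSimplex ℝ B)
    (h : ∀ x, Q x ≤ Q' x + M) :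
    softValue α P π ρ Q s ≤ softValue α P π ρ Q' s + M := by
  refine sum_mul_le_sum_mul_add hρ fun b => ?_
  have := sum_mul_le_sum_mul_add (M := M) (hπ b)
    fun a => show Q (s, a, b) - α * log (π s b a) ≤ Q' (s, a, b) - α * log (π s b a) + M by
      linarith [h (s, a, b)]
  simp only [policyValue]
  linarith

end Values

section Evaluation

variable {S A B : Type*} [Fintype S] [Fintype A] [Fintype B] {α γ : ℝ} {R : S × A × B → ℝ}
  {p : S → A → B → S → ℝ} {P : S → B → ℝ} {π π' : S → B → A → ℝ} {ρ ρ' : S → B → ℝ}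
  {Q Q' : S × A × B → ℝ}

theorem evalOp_apply (x : S × A × B) :
    evalOp α γ R p P π ρ Q x =
      R x + γ * ∑ s', p x.1 x.2.1 x.2.2 s' * softValue α P π ρ Q s' := by
  simp only [evalOp, softValue, policyValue, mul_sub, sum_sub_distrib]

theorem evalOp_le_evalOp_of_softValue_le (hγ : 0 ≤ γ) (hp : ∀ s a b s', 0 ≤ p s a b s')
    (h : ∀ s, softValue α P π ρ Q s ≤ softValue α P π' ρ' Q s) (x : S × A × B) :
    evalOp α γ R p P π ρ Q x ≤ evalOp α γ R p P π' ρ' Q x := by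
  rw [evalOp_apply, evalOp_apply]
  gcongr with s'
  · exact hp _ _ _ s'
  · exact h s'

theorem evalOp_le_evalOp_add (hγ : 0 ≤ γ) (hp : ∀ s a b, p s a b ∈ stdSimplex ℝ S)
    (hπ : ∀ s b, π s b ∈ stdSimplex ℝ A) (hρ : ∀ s, ρ s ∈ stdSimplex ℝ B) {M : ℝ}
    (h : ∀ x, Q x ≤ Q' x + M) (x : S × A × B) :
    evalOp α γ R p P π ρ Q x ≤ evalOp α γ R p P π ρ Q' x + γ * M := by
  rw [evalOp_apply, evalOp_apply]
  have := sum_mul_le_sum_mul_add (hp x.1 x.2.1 x.2.2)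
    fun s' => softValue_le_softValue_add (α := α) (P := P) (hπ s') (hρ s') h
  nlinarith

theorem le_of_softValue_le (hγ₀ : 0 ≤ γ) (hγ₁ : γ < 1) (hp : ∀ s a b, p s a b ∈ stdSimplex ℝ S)
    (hπ' : ∀ s b, π' s b ∈ stdSimplex ℝ A) (hρ' : ∀ s, ρ' s ∈ stdSimplex ℝ B)
    (hQ : evalOp α γ R p P π ρ Q = Q) (hQ' : evalOp α γ R p P π' ρ' Q' = Q')
    (h : ∀ s, softValue α P π ρ Q s ≤ softValue α P π' ρ' Q s) : Q ≤ Q' :=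
  le_of_le_map_of_isFixedPt hγ₁ (fun _ _ _ => evalOp_le_evalOp_add hγ₀ hp hπ' hρ')
    (fun x => (congrFun hQ x).ge.trans
      (evalOp_le_evalOp_of_softValue_le hγ₀ (fun s a b => (hp s a b).1) h x))
    hQ'

end Evaluation

theorem alternating_updates_monotone_improvement_general
    {S A B : Type*} [Fintype S] [Fintype A] [Fintype B]
    (α γ : ℝ) (hα : 0 < α) (hγ₀ : 0 ≤ γ) (hγ₁ : γ < 1)
    (R : S × A × B → ℝ)
    (p : S → A → B → S → ℝ)
    (hp_nonneg : ∀ s a b s', 0 ≤ p s a b s') (hp_sum : ∀ s a b, ∑ s', p s a b s' = 1)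
    (P : S → B → ℝ) (hP_pos : ∀ s b, 0 < P s b)
    (πseq : ℕ → S → B → A → ℝ) (ρseq : ℕ → S → B → ℝ)
    (hπ0_nonneg : ∀ s b a, 0 ≤ πseq 0 s b a) (hπ0_sum : ∀ s b, ∑ a, πseq 0 s b a = 1)
    (hρ0_nonneg : ∀ s b, 0 ≤ ρseq 0 s b) (hρ0_sum : ∀ s, ∑ b, ρseq 0 s b = 1)
    (Qseq : ℕ → S × A × B → ℝ)
    (hQseq : ∀ k, evalOp α γ R p P (πseq k) (ρseq k) (Qseq k) = Qseq k)
    (Qmix : ℕ → S × A × B → ℝ)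
    (hQmix : ∀ k, evalOp α γ R p P (πseq (k + 1)) (ρseq k) (Qmix k) = Qmix k)
    (hπ_rec : ∀ k, πseq (k + 1) = greedyPolicy α (Qseq k))
    (hρ_rec : ∀ k, ρseq (k + 1) = improvedOpponent α P (πseq (k + 1)) (Qmix k)) :
    ∀ (k : ℕ) (x : S × A × B), Qseq k x ≤ Qseq (k + 1) x := by
  intro k x
  have : Nonempty A := ⟨x.2.1⟩
  have : Nonempty B := ⟨x.2.2⟩
  have hp (s a b) : p s a b ∈ stdSimplex ℝ S := ⟨hp_nonneg s a b, hp_sum s a b⟩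
  have hπ : ∀ k s b, πseq k s b ∈ stdSimplex ℝ A := by
    rintro (_ | k) s b
    · exact ⟨hπ0_nonneg s b, hπ0_sum s b⟩
    · rw [hπ_rec k]
      exact greedyPolicy_mem_stdSimplex
  have hρ : ∀ k s, ρseq k s ∈ stdSimplex ℝ B := by
    rintro (_ | k) s
    · exact ⟨hρ0_nonneg s, hρ0_sum s⟩
    · rw [hρ_rec k]
      exact gibbs_mem_stdSimplex (hP_pos s) _
  have policy_step : Qseq k ≤ Qmix k :=
    le_of_softValue_le hγ₀ hγ₁ hp (hπ (k + 1)) (hρ k) (hQseq k) (hQmix k) fun s => by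
      rw [hπ_rec k]
      exact softValue_le_softValue_greedyPolicy hα (hπ k s) (hρ k s).1
  have opponent_step : Qmix k ≤ Qseq (k + 1) :=
    le_of_softValue_le hγ₀ hγ₁ hp (hπ (k + 1)) (hρ (k + 1)) (hQmix k) (hQseq (k + 1)) fun s => by
      rw [hρ_rec k]
      exact softValue_le_softValue_improvedOpponent (hP_pos s) (hρ k s)
  exact (policy_step.trans opponent_step) x

/-- Monotone improvement of alternating policy/opponent-model updates:
starting from any conditional policy π₀ and opponent model ρ₀, with
π_{k+1} the greedy policy of Q_{π_k,ρ_k} and ρ_{k+1} the improved opponent model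
computed from Q_{π_{k+1},ρ_k}, the sequence of evaluation values Q_{π_k,ρ_k}
(each the unique fixed point of its policy-evaluation operator) is pointwise
nondecreasing in k. -/
theorem alternating_updates_monotone_improvement
    {S A B : Type*} [Fintype S] [Fintype A] [Fintype B]
    [Nonempty S] [Nonempty A] [Nonempty B]
    (α γ : ℝ) (hα : 0 < α) (hγ₀ : 0 ≤ γ) (hγ₁ : γ < 1)
    (R : S × A × B → ℝ)
    (p : S → A → B → S → ℝ)
    (hp_nonneg : ∀ s a b s', 0 ≤ p s a b s') (hp_sum : ∀ s a b, ∑ s', p s a b s' = 1)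
    (P : S → B → ℝ) (hP_pos : ∀ s b, 0 < P s b) (hP_sum : ∀ s, ∑ b, P s b = 1)
    (πseq : ℕ → S → B → A → ℝ) (ρseq : ℕ → S → B → ℝ)
    (hπ0_nonneg : ∀ s b a, 0 ≤ πseq 0 s b a) (hπ0_sum : ∀ s b, ∑ a, πseq 0 s b a = 1)
    (hρ0_nonneg : ∀ s b, 0 ≤ ρseq 0 s b) (hρ0_sum : ∀ s, ∑ b, ρseq 0 s b = 1)
    (Qseq : ℕ → S × A × B → ℝ)
    (hQseq : ∀ k, evalOp α γ R p P (πseq k) (ρseq k) (Qseq k) = Qseq k)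
    (Qmix : ℕ → S × A × B → ℝ)
    (hQmix : ∀ k, evalOp α γ R p P (πseq (k + 1)) (ρseq k) (Qmix k) = Qmix k)
    (hπ_rec : ∀ k, πseq (k + 1) = greedyPolicy α (Qseq k))
    (hρ_rec : ∀ k, ρseq (k + 1) = improvedOpponent α P (πseq (k + 1)) (Qmix k)) :
    ∀ (k : ℕ) (x : S × A × B), Qseq k x ≤ Qseq (k + 1) x :=
  alternating_updates_monotone_improvement_general α γ hα hγ₀ hγ₁ R p hp_nonneg hp_sum P hP_pos πseq
    ρseq hπ0_nonneg hπ0_sum hρ0_nonneg hρ0_sum Qseq hQseq Qmix hQmix hπ_rec hρ_rec
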